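/- Let $m \geq 2$ and $L \geq 1$ be integers. For vectors $\mathbf{v} = (v_1, \ldots, v_L)$, $\mathbf{v}' = (v_1', \ldots, v_L') \in \{0,1\}^L$ and integer $a$, define $S(\mathbf{v}, \mathbf{v}', a) = \sum_{x=1}^{L} \sum_{t=1}^{m-1} e_m\big(t(\sum_{j=1}^x v_j - \sum_{j=1}^x v_j' - a)\big)$. Then $\sum_{a=0}^{m-1} \sum_{\mathbf{v}, \mathbf{v}' \in \{0,1\}^L} |S(\mathbf{v}, \mathbf{v}', a)|^2 \leq 2^{2L+2} m^4 L$. -/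

import Mathlib

open Real

noncomputable def eAdd (m : ℕ) (z : ℝ) : ℂ := Complex.exp (2 * π * Complex.I * z / m)

/-
Writing the phase as `t * D_x - t * a` and applying Parseval for the additive characters mod `m`
in the variable `a` turns the left side into `m Σ_t Σ_{v,v'} |Σ_x e_m(t (V_x(v) - V_x(v')))|²`,
where `V_x` is the prefix sum up to `x`. This is `‖A A*‖²` (Frobenius) for the matrix
`A_{x,v} = e_m(t V_x(v))`, which equals `‖A* A‖² = Σ_{x,x'} |Σ_v e_m(t (V_x(v) - V_{x'}(v)))|²`.
The inner sum factors over coordinates and has modulus `2^L |cos(π t/m)|^|x - x'|`, so the double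
sum is a geometric series in `|x - x'|` with ratio `cos²(π t/m) = 1 - sin²(π t/m) ≤ 1 - 4/m²`.
-/

open Finset
open scoped symmDiff

lemma eAdd_add (m : ℕ) (z w : ℝ) : eAdd m (z + w) = eAdd m z * eAdd m w := by
  rw [eAdd, eAdd, eAdd, ← Complex.exp_add]
  push_cast
  ring_nf

lemma eAdd_sum {α : Type*} (m : ℕ) (s : Finset α) (f : α → ℝ) :
    eAdd m (∑ j ∈ s, f j) = ∏ j ∈ s, eAdd m (f j) := by
  simp only [eAdd, ← Complex.exp_sum]
  push_cast
  simp only [mul_sum, sum_div]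

lemma star_eAdd (m : ℕ) (z : ℝ) : (starRingEnd ℂ) (eAdd m z) = eAdd m (-z) := by
  rw [eAdd, eAdd, ← Complex.exp_conj]
  simp [map_div₀, map_ofNat]

lemma eAdd_natCast_mul (m n : ℕ) (z : ℝ) : eAdd m (z * n) = eAdd m z ^ n := by
  rw [eAdd, eAdd, ← Complex.exp_nat_mul]
  push_cast
  ring_nf

lemma eAdd_eq_one_iff {m : ℕ} (hm : m ≠ 0) (c : ℤ) : eAdd m c = 1 ↔ (m : ℤ) ∣ c := by
  rw [eAdd, Complex.exp_eq_one_iff]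
  refine exists_congr fun n => ?_
  rw [show 2 * π * Complex.I * (c : ℝ) / m = (c / m : ℂ) * (2 * π * Complex.I) by push_cast; ring,
    mul_left_inj' Complex.two_pi_I_ne_zero, div_eq_iff (by exact_mod_cast hm), mul_comm]
  norm_cast

lemma sum_range_eAdd_intCast_mul (m : ℕ) (c : ℤ) :
    ∑ a ∈ range m, eAdd m (c * a) = if (m : ℤ) ∣ c then (m : ℂ) else 0 := by
  rcases eq_or_ne m 0 with rfl | hm
  · simp
  split_ifs with hc
  · have h : ∀ a : ℕ, eAdd m (c * a) = 1 := fun a => by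
      exact_mod_cast (eAdd_eq_one_iff hm (c * a)).mpr (dvd_mul_of_dvd_left hc _)
    simp [h]
  · have hζ : eAdd m c ≠ 1 := fun h => hc ((eAdd_eq_one_iff hm c).mp h)
    simp only [eAdd_natCast_mul]
    rw [geom_sum_eq hζ, ← eAdd_natCast_mul, show ((c : ℝ) * m) = ((c * m : ℤ) : ℝ) by push_cast; ring,
      (eAdd_eq_one_iff hm _).mpr (dvd_mul_left _ _), sub_self, zero_div]

lemma sum_range_norm_sq_sum_mul_eAdd {m : ℕ} {T : Finset ℕ} (hT : T ⊆ range m) (g : ℕ → ℂ) :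
    ∑ a ∈ range m, ‖∑ t ∈ T, g t * eAdd m (-(t * a))‖ ^ 2 = m * ∑ t ∈ T, ‖g t‖ ^ 2 := by
  have orthogonal : ∀ t ∈ T, ∀ t' ∈ T,
      ∑ a ∈ range m, eAdd m (((t' - t : ℤ) : ℝ) * a) = if t = t' then (m : ℂ) else 0 := by
    intro t ht t' ht'
    rw [sum_range_eAdd_intCast_mul]
    refine if_congr ⟨fun h => ?_, fun h => h ▸ by simp⟩ rfl rfl
    exact (Nat.modEq_iff_dvd.mpr h).eq_of_lt_of_lt (mem_range.mp (hT ht)) (mem_range.mp (hT ht'))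
  apply Complex.ofReal_injective
  push_cast
  simp_rw [← Complex.mul_conj', map_sum, map_mul, star_eAdd, neg_neg, sum_mul_sum, mul_sum]
  calc ∑ a ∈ range m, ∑ t ∈ T, ∑ t' ∈ T,
        g t * eAdd m (-(t * a)) * ((starRingEnd ℂ) (g t') * eAdd m (t' * a))
      = ∑ t ∈ T, ∑ t' ∈ T, g t * (starRingEnd ℂ) (g t') *
          ∑ a ∈ range m, eAdd m (((t' - t : ℤ) : ℝ) * a) := by
        rw [sum_comm]
        refine sum_congr rfl fun t _ => ?_
        rw [sum_comm]
        refine sum_congr rfl fun t' _ => ?_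
        rw [mul_sum]
        refine sum_congr rfl fun a _ => ?_
        rw [mul_mul_mul_comm, ← eAdd_add]
        push_cast
        ring_nf
    _ = ∑ t ∈ T, m * (g t * (starRingEnd ℂ) (g t)) := by
        refine sum_congr rfl fun t ht => ?_
        rw [sum_congr rfl fun t' ht' => by rw [orthogonal t ht t' ht'], sum_eq_single_of_mem t ht]
        · simp [mul_comm]
        · intro t' _ h
          simp [Ne.symm h]

lemma sum_sum_eAdd_mul_sub {X : Type*} (m : ℕ) (s : Finset X) (T : Finset ℕ) (D : X → ℝ)
    (a : ℝ) :
    ∑ x ∈ s, ∑ t ∈ T, eAdd m (t * (D x - a)) =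
      ∑ t ∈ T, (∑ x ∈ s, eAdd m (t * D x)) * eAdd m (-(t * a)) := by
  rw [sum_comm]
  refine sum_congr rfl fun t _ => ?_
  rw [sum_mul]
  refine sum_congr rfl fun x _ => ?_
  rw [← eAdd_add]
  ring_nf

lemma norm_one_add_eAdd (m : ℕ) (z : ℝ) : ‖1 + eAdd m z‖ = 2 * |cos (π * z / m)| := by
  have h : 1 + eAdd m z =
      Complex.exp ((π * z / m : ℝ) * Complex.I) * (2 * Complex.cos (π * z / m : ℝ)) := by
    rw [Complex.two_cos, mul_add, ← Complex.exp_add, ← Complex.exp_add, eAdd]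
    push_cast
    ring_nf
    simp [add_comm]
  rw [h, norm_mul, Complex.norm_exp_ofReal_mul_I, one_mul, norm_mul, ← Complex.ofReal_cos,
    Complex.norm_real, Real.norm_eq_abs, Complex.norm_two]

lemma sum_sum_norm_sq_sum_mul_conj_swap {X V : Type*} (s : Finset X) (P : Finset V) (F : X → V → ℂ) :
    ∑ v ∈ P, ∑ v' ∈ P, ‖∑ x ∈ s, F x v * (starRingEnd ℂ) (F x v')‖ ^ 2 =
      ∑ x ∈ s, ∑ x' ∈ s, ‖∑ v ∈ P, F x v * (starRingEnd ℂ) (F x' v)‖ ^ 2 := by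
  apply Complex.ofReal_injective
  push_cast
  simp_rw [← Complex.mul_conj', map_sum, map_mul, Complex.conj_conj, sum_mul_sum]
  rw [sum_congr rfl fun v _ => sum_comm, sum_comm]
  refine sum_congr rfl fun x _ => ?_
  rw [sum_congr rfl fun v _ => sum_comm, sum_comm]
  refine sum_congr rfl fun x' _ => sum_congr rfl fun v _ => sum_congr rfl fun v' _ => ?_
  ring

lemma norm_sum_piFinset_eAdd_sub {ι : Type*} [Fintype ι] [DecidableEq ι] (m : ℕ) (t : ℝ)
    (s s' : Finset ι) :
    ‖∑ v ∈ Fintype.piFinset (fun _ : ι => ({0, 1} : Finset ℕ)),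
        eAdd m (t * (∑ j ∈ s, (v j : ℝ) - ∑ j ∈ s', (v j : ℝ)))‖ =
      2 ^ Fintype.card ι * |cos (π * t / m)| ^ #(s ∆ s') := by
  set c : ι → ℝ := fun j => (if j ∈ s then 1 else 0) - (if j ∈ s' then 1 else 0)
  have phase (v : ι → ℕ) :
      t * (∑ j ∈ s, (v j : ℝ) - ∑ j ∈ s', (v j : ℝ)) = ∑ j, t * c j * v j := by
    simp only [c, mul_sub, sub_mul, mul_ite, mul_one, mul_zero, ite_mul, zero_mul, sum_sub_distrib,
      sum_ite_mem, univ_inter, mul_sum]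
  have factor (j : ι) :
      ‖1 + eAdd m (t * c j)‖ = 2 * if j ∈ s ∆ s' then |cos (π * t / m)| else 1 := by
    rw [norm_one_add_eAdd]
    by_cases hs : j ∈ s <;> by_cases hs' : j ∈ s' <;> simp [c, hs, hs', mem_symmDiff, neg_div]
  calc _ = ‖∏ j, ∑ u ∈ ({0, 1} : Finset ℕ), eAdd m (t * c j * u)‖ := by
        simp_rw [phase, eAdd_sum, prod_univ_sum]
    _ = ∏ j, ‖1 + eAdd m (t * c j)‖ := by simp [norm_prod, eAdd]
    _ = _ := by
        simp_rw [factor, prod_mul_distrib, prod_const, prod_ite_mem, univ_inter, prod_const,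
          card_univ]

lemma card_Iic_symmDiff_Iic {n : ℕ} (x y : Fin n) : #(Iic x ∆ Iic y) = Nat.dist x y := by
  wlog h : x ≤ y generalizing x y
  · rw [symmDiff_comm, Nat.dist_comm]
    exact this y x (le_of_not_ge h)
  rw [symmDiff_of_le (Iic_subset_Iic.mpr h), card_sdiff_of_subset (Iic_subset_Iic.mpr h),
    Fin.card_Iic, Fin.card_Iic, Nat.dist_eq_sub_of_le (Fin.le_iff_val_le_val.mp h)]
  omega

lemma sum_range_pow_dist_le {q : ℝ} (hq0 : 0 ≤ q) (hq1 : q < 1) (n i : ℕ) :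
    ∑ j ∈ range n, q ^ Nat.dist i j ≤ 2 / (1 - q) := by
  have geom (k : ℕ) : ∑ j ∈ range k, q ^ j ≤ 1 / (1 - q) := by
    simpa using geom_sum_Ico_le_of_lt_one (m := 0) (n := k) hq0 hq1
  have below : ∑ j ∈ range (i + 1), q ^ Nat.dist i j = ∑ j ∈ range (i + 1), q ^ j := by
    rw [← sum_range_reflect]
    refine sum_congr rfl fun j hj => ?_
    rw [mem_range] at hj
    rw [Nat.dist_eq_sub_of_le_right (by omega)]
    congr 1
    omega
  have above : ∑ k ∈ range n, q ^ Nat.dist i (i + 1 + k) ≤ ∑ k ∈ range n, q ^ k :=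
    sum_le_sum fun k _ => by
      rw [Nat.dist_eq_sub_of_le (by omega)]
      exact pow_le_pow_of_le_one hq0 hq1.le (by omega)
  calc ∑ j ∈ range n, q ^ Nat.dist i j ≤ ∑ j ∈ range (i + 1 + n), q ^ Nat.dist i j :=
        sum_le_sum_of_subset_of_nonneg (range_subset_range.mpr (by omega))
          fun _ _ _ => pow_nonneg hq0 _
    _ = ∑ j ∈ range (i + 1), q ^ j + ∑ k ∈ range n, q ^ Nat.dist i (i + 1 + k) := by
        rw [sum_range_add, below]
    _ ≤ 1 / (1 - q) + 1 / (1 - q) := add_le_add (geom _) (above.trans (geom _))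
    _ = 2 / (1 - q) := by ring

lemma sum_sum_pow_card_Iic_symmDiff_Iic_le {q : ℝ} (hq0 : 0 ≤ q) (hq1 : q < 1) (n : ℕ) :
    ∑ x : Fin n, ∑ y : Fin n, q ^ #(Iic x ∆ Iic y) ≤ n * (2 / (1 - q)) := by
  simp_rw [card_Iic_symmDiff_Iic]
  calc ∑ x : Fin n, ∑ y : Fin n, q ^ Nat.dist x y ≤ ∑ _x : Fin n, 2 / (1 - q) :=
        sum_le_sum fun x _ => by
          simpa [Fin.sum_univ_eq_sum_range (fun j => q ^ Nat.dist x j)] using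
            sum_range_pow_dist_le hq0 hq1 n x
    _ = n * (2 / (1 - q)) := by simp

lemma two_div_le_sin_pi_mul_div {m t : ℕ} (ht0 : 0 < t) (htm : t < m) :
    2 / m ≤ sin (π * t / m) := by
  wlog h : 2 * t ≤ m generalizing t
  · have := this (t := m - t) (by omega) (by omega) (by omega)
    have hm : (m : ℝ) ≠ 0 := by exact_mod_cast (by omega : m ≠ 0)
    rwa [Nat.cast_sub htm.le, show π * (m - t : ℝ) / m = π - π * t / m by field_simp,
      sin_pi_sub] at this
  have hm : (0 : ℝ) < m := by exact_mod_cast (by omega : 0 < m)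
  have h' : (2 * t : ℝ) ≤ m := by exact_mod_cast h
  calc 2 / (m : ℝ) = 2 / π * (π * 1 / m) := by field_simp
    _ ≤ 2 / π * (π * t / m) := by gcongr; exact_mod_cast ht0
    _ ≤ sin (π * t / m) := mul_le_sin (by positivity) (by
        rw [div_le_iff₀ hm]; nlinarith [pi_pos])

lemma sum_sum_norm_sq_sum_eAdd_prefix_le {L m t : ℕ} (ht0 : 0 < t) (htm : t < m) :
    ∑ v ∈ Fintype.piFinset (fun _ : Fin L => ({0, 1} : Finset ℕ)),
      ∑ v' ∈ Fintype.piFinset (fun _ : Fin L => ({0, 1} : Finset ℕ)),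
        ‖∑ x : Fin L, eAdd m (t * (∑ j ∈ Iic x, (v j : ℝ) - ∑ j ∈ Iic x, (v' j : ℝ)))‖ ^ 2 ≤
      4 ^ L * L * (m ^ 2 / 2) := by
  have hsin := two_div_le_sin_pi_mul_div ht0 htm
  have hm : (0 : ℝ) < m := by exact_mod_cast (by omega : 0 < m)
  have hsin_pos : 0 < sin (π * t / m) := lt_of_lt_of_le (by positivity) hsin
  have hcos : cos (π * t / m) ^ 2 < 1 := by nlinarith [sin_sq_add_cos_sq (π * t / m)]
  have swap := sum_sum_norm_sq_sum_mul_conj_swap univ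
    (Fintype.piFinset fun _ : Fin L => ({0, 1} : Finset ℕ))
    (fun x v => eAdd m (t * ∑ j ∈ Iic x, (v j : ℝ)))
  simp only [star_eAdd, ← eAdd_add, ← mul_neg, ← mul_add, ← sub_eq_add_neg] at swap
  have hq : 2 / (1 - cos (π * t / m) ^ 2) ≤ (m : ℝ) ^ 2 / 2 := by
    rw [← sin_sq, div_le_iff₀ (by positivity)]
    have := pow_le_pow_left₀ (by positivity) hsin 2
    rw [div_pow] at this
    field_simp at this ⊢
    nlinarith
  simp only [swap, norm_sum_piFinset_eAdd_sub, Fintype.card_fin, mul_pow, pow_right_comm _ _ 2,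
    sq_abs, ← mul_sum]
  calc ((2 : ℝ) ^ 2) ^ L * ∑ x : Fin L, ∑ y : Fin L, (cos (π * t / m) ^ 2) ^ #(Iic x ∆ Iic y)
      ≤ 4 ^ L * ((L : ℝ) * (2 / (1 - cos (π * t / m) ^ 2))) := by
        rw [show (2 : ℝ) ^ 2 = 4 by norm_num]
        gcongr
        exact sum_sum_pow_card_Iic_symmDiff_Iic_le (sq_nonneg _) hcos L
    _ ≤ 4 ^ L * ((L : ℝ) * (m ^ 2 / 2)) := by gcongr
    _ = 4 ^ L * L * (m ^ 2 / 2) := by ring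

theorem stmt_13_general (m L : ℕ) :
    ∑ a ∈ Finset.range m,
      ∑ v ∈ Fintype.piFinset (fun _ : Fin L => ({0, 1} : Finset ℕ)),
        ∑ v' ∈ Fintype.piFinset (fun _ : Fin L => ({0, 1} : Finset ℕ)),
          ‖∑ x : Fin L, ∑ t ∈ Finset.Icc 1 (m - 1),
              eAdd m ((t : ℝ) * ((∑ j ∈ Finset.Iic x, (v j : ℝ)) -
                (∑ j ∈ Finset.Iic x, (v' j : ℝ)) - a))‖ ^ 2 ≤
      2 ^ (2 * L + 2) * (m : ℝ) ^ 4 * L := by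
  have hT : Icc 1 (m - 1) ⊆ range m := fun t ht => by
    simp only [mem_Icc, mem_range] at ht ⊢
    omega
  simp only [sum_sum_eAdd_mul_sub]
  rw [sum_comm, sum_congr rfl fun v _ => sum_comm]
  simp only [sum_range_norm_sq_sum_mul_eAdd hT, ← mul_sum]
  rw [sum_congr rfl fun v _ => sum_comm, sum_comm]
  calc (m : ℝ) * ∑ t ∈ Icc 1 (m - 1), _
      ≤ m * ∑ _t ∈ Icc 1 (m - 1), 4 ^ L * L * ((m : ℝ) ^ 2 / 2) := by
        gcongr with t ht
        rw [mem_Icc] at ht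
        exact sum_sum_norm_sq_sum_eAdd_prefix_le (by omega) (by omega)
    _ ≤ m * (m * (4 ^ L * L * ((m : ℝ) ^ 2 / 2))) := by
        rw [sum_const, nsmul_eq_mul, Nat.card_Icc]
        gcongr
        exact_mod_cast (by omega : m - 1 + 1 - 1 ≤ m)
    _ ≤ 2 ^ (2 * L + 2) * (m : ℝ) ^ 4 * L := by
        rw [pow_add, pow_mul]
        norm_num
        nlinarith [show (0 : ℝ) ≤ 4 ^ L * m ^ 4 * L by positivity]

theorem stmt_13 (m L : ℕ) (hm : 2 ≤ m) (hL : 1 ≤ L) :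
    ∑ a ∈ Finset.range m,
      ∑ v ∈ Fintype.piFinset (fun _ : Fin L => ({0, 1} : Finset ℕ)),
        ∑ v' ∈ Fintype.piFinset (fun _ : Fin L => ({0, 1} : Finset ℕ)),
          ‖∑ x : Fin L, ∑ t ∈ Finset.Icc 1 (m - 1),
              eAdd m ((t : ℝ) * ((∑ j ∈ Finset.Iic x, (v j : ℝ)) -
                (∑ j ∈ Finset.Iic x, (v' j : ℝ)) - a))‖ ^ 2 ≤
      2 ^ (2 * L + 2) * (m : ℝ) ^ 4 * L :=
  stmt_13_general m L
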